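/- Let f̃ : ℝ² → ℝ² be a lift of a torus homeomorphism homotopic to the identity, and let K > 0 be such that ‖f̃(x) − x‖ ≤ K/2 and ‖f̃⁻¹(x) − x‖ ≤ K/2 for all x ∈ ℝ². Then for every n ∈ ℕ, the Hausdorff distance between A_n and A_{n+1} is at most 2K/d_n. -/

import Mathlib

open Metric Set Filter Topology

noncomputable section

abbrev E2 : Type := EuclideanSpace ℝ (Fin 2)

/-- The image in `ℝ²` of an integer vector. -/
def intVec (v : Fin 2 → ℤ) : E2 := WithLp.toLp 2 (fun i => (v i : ℝ))

/-- `f` is a lift of a torus homeomorphism homotopic to the identity. -/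
def IsLift (f : E2 → E2) : Prop :=
  ∀ (x : E2) (v : Fin 2 → ℤ), f (x + intVec v) = f x + intVec v

/-- Lift condition for a homeomorphism of the torus whose linear part is the
integer matrix `A`. -/
def IsLiftMat (f : E2 → E2) (A : Matrix (Fin 2) (Fin 2) ℤ) : Prop :=
  ∀ (x : E2) (v : Fin 2 → ℤ), f (x + intVec v) = f x + intVec (A.mulVec v)

/-- Lift condition for a homeomorphism homotopic to the Dehn twist with matrix
`[[1,k₀],[0,1]]`. -/
def IsDehnLift (f : E2 → E2) (k₀ : ℤ) : Prop :=
  (∀ x : E2, f (x + intVec ![1, 0]) = f x + intVec ![1, 0]) ∧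
  (∀ x : E2, f (x + intVec ![0, 1]) = f x + intVec ![k₀, 1])

/-- The fundamental domain `D = [0,1] × [0,1]`. -/
def Dom : Set E2 := {x | x 0 ∈ Icc (0:ℝ) 1 ∧ x 1 ∈ Icc (0:ℝ) 1}

/-- `d_n`, the diameter of `f̃ⁿ(D)`. -/
def dn (f : E2 → E2) (n : ℕ) : ℝ := Metric.diam (f^[n] '' Dom)

/-- `A_n = d_n⁻¹ • (f̃ⁿ(D) − f̃ⁿ(x₀))`. -/
def An (f : E2 → E2) (x₀ : E2) (n : ℕ) : Set E2 :=
  (fun y => (dn f n)⁻¹ • (y - f^[n] x₀)) '' (f^[n] '' Dom)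

/-- A good limit value of the sequence `(A_n)`: a compact set which is the
Hausdorff limit of a subsequence `(A_{n_k})` with `d_{n_k} → +∞`. -/
def IsGoodLimit (f : E2 → E2) (x₀ : E2) (A : Set E2) : Prop :=
  IsCompact A ∧ ∃ nk : ℕ → ℕ, StrictMono nk ∧
    Tendsto (fun k => dn f (nk k)) atTop atTop ∧
    Tendsto (fun k => Metric.hausdorffDist (An f x₀ (nk k)) A) atTop (nhds 0)

/-- A vector of irrational slope: nonzero and not a real multiple of a nonzero
integer vector. -/
def IrrationalSlope (u : E2) : Prop :=
  u ≠ 0 ∧ ¬∃ (t : ℝ) (w : Fin 2 → ℤ), w ≠ 0 ∧ u = t • intVec w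

/-- `f` has bounded deviation from direction `v`. -/
def BoundedDeviation (f : E2 → E2) (v : E2) : Prop :=
  ∃ (ρ : E2) (M : ℝ), 0 ≤ M ∧
    ∀ (x : E2) (n : ℕ), |(inner ℝ (f^[n] x - x - (n : ℝ) • ρ) v : ℝ)| ≤ M

/-- The rotation set of `f`. -/
def rotSet (f : E2 → E2) : Set E2 :=
  {w | ∃ (y : ℕ → E2) (m : ℕ → ℕ), Tendsto m atTop atTop ∧
    Tendsto (fun k => (m k : ℝ)⁻¹ • (f^[m k] (y k) - y k)) atTop (nhds w)}

/-- The line `ℝ•u` through the origin. -/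
def lineThrough (u : E2) : Set E2 := {x | ∃ t : ℝ, x = t • u}

/-!
Each point moves by at most `K/2`, so diameters change by at most `K` under `f̃`, whence
`|d_{n+1} - d_n| ≤ K`. Pairing `y ∈ f̃ⁿ(D)` with `f̃ y ∈ f̃ⁿ⁺¹(D)` matches `A_n` with `A_{n+1}`:
the two rescaled points differ by at most `K/d_n` from the displacements of `y` and of the base
point, plus at most `K/d_n` from the change of scale `d_n⁻¹ - d_{n+1}⁻¹`.
-/

open Bornology

section DisplacementBounded

variable {α : Type*} [PseudoMetricSpace α] {g : α → α} {c : ℝ} {s : Set α}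

theorem isBounded_image_of_dist_le (hg : ∀ x, dist (g x) x ≤ c) (hs : IsBounded s) :
    IsBounded (g '' s) :=
  (hs.cthickening (δ := c)).subset <| by
    rintro _ ⟨x, hx, rfl⟩
    exact mem_cthickening_of_dist_le _ x c s hx (hg x)

theorem abs_diam_image_sub_diam_le (hg : ∀ x, dist (g x) x ≤ c) (hs : IsBounded s)
    (hs₀ : s.Nonempty) : |diam (g '' s) - diam s| ≤ 2 * c := by
  have hgs := isBounded_image_of_dist_le hg hs
  have hg' : ∀ y, dist y (g y) ≤ c := fun y => (dist_comm y (g y)).trans_le (hg y)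
  rw [abs_sub_le_iff, sub_le_iff_le_add', sub_le_iff_le_add']
  constructor
  · refine diam_le_of_forall_dist_le_of_nonempty (hs₀.image g) ?_
    rintro _ ⟨y, hy, rfl⟩ _ ⟨z, hz, rfl⟩
    have := dist_le_diam_of_mem hs hy hz
    linarith [dist_triangle4 (g y) y z (g z), hg y, hg' z]
  · refine diam_le_of_forall_dist_le_of_nonempty hs₀ fun y hy z hz => ?_
    have := dist_le_diam_of_mem hgs (mem_image_of_mem g hy) (mem_image_of_mem g hz)
    linarith [dist_triangle4 y (g y) (g z) z, hg z, hg' y]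

end DisplacementBounded

theorem hausdorffDist_image_image_le {α β : Type*} [PseudoMetricSpace β] {φ ψ : α → β}
    {s : Set α} {r : ℝ} (hr : 0 ≤ r) (h : ∀ x ∈ s, dist (φ x) (ψ x) ≤ r) :
    hausdorffDist (φ '' s) (ψ '' s) ≤ r := by
  refine hausdorffDist_le_of_mem_dist hr ?_ ?_
  · rintro _ ⟨x, hx, rfl⟩
    exact ⟨ψ x, mem_image_of_mem ψ hx, h x hx⟩
  · rintro _ ⟨x, hx, rfl⟩
    exact ⟨φ x, mem_image_of_mem φ hx, dist_comm (φ x) (ψ x) ▸ h x hx⟩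

section Rescaling

variable {E : Type*} [NormedAddCommGroup E] [NormedSpace ℝ E]

theorem norm_inv_smul_sub_inv_smul_le {u v : E} {d d' k : ℝ} (hd : 0 < d) (hd' : 0 < d')
    (huv : ‖u - v‖ ≤ k) (hv : ‖v‖ ≤ d') (hdd' : |d - d'| ≤ k) :
    ‖d⁻¹ • u - d'⁻¹ • v‖ ≤ 2 * k / d := by
  have hinv : |d⁻¹ - d'⁻¹| ≤ k / (d * d') := by
    rw [inv_sub_inv hd.ne' hd'.ne', abs_div, abs_of_pos (mul_pos hd hd'), abs_sub_comm]
    gcongr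
  calc ‖d⁻¹ • u - d'⁻¹ • v‖ = ‖d⁻¹ • (u - v) + (d⁻¹ - d'⁻¹) • v‖ := by congr 1; module
    _ ≤ d⁻¹ * ‖u - v‖ + |d⁻¹ - d'⁻¹| * ‖v‖ := by
      grw [norm_add_le, norm_smul, norm_smul, Real.norm_of_nonneg (inv_nonneg.2 hd.le),
        Real.norm_eq_abs]
    _ ≤ d⁻¹ * k + k / (d * d') * d' := by
      gcongr
      exact div_nonneg ((norm_nonneg _).trans huv) (by positivity)
    _ = 2 * k / d := by field_simp; ring

theorem hausdorffDist_rescale_image_le {g : E → E} {K : ℝ} (hg : ∀ x, ‖g x - x‖ ≤ K / 2)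
    {S : Set E} (hS : IsBounded S) {a : E} (ha : a ∈ S) (hd : 0 < diam S)
    (hd' : 0 < diam (g '' S)) :
    hausdorffDist ((fun y => (diam S)⁻¹ • (y - a)) '' S)
      ((fun z => (diam (g '' S))⁻¹ • (z - g a)) '' (g '' S)) ≤ 2 * K / diam S := by
  have hK : 0 ≤ K := by linarith [(norm_nonneg _).trans (hg a)]
  have hg' : ∀ x, dist (g x) x ≤ K / 2 := by simpa only [dist_eq_norm] using hg
  have hdiam : |diam S - diam (g '' S)| ≤ K := by
    rw [abs_sub_comm]
    linarith [abs_diam_image_sub_diam_le hg' hS ⟨a, ha⟩]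
  rw [image_image]
  refine hausdorffDist_image_image_le (by positivity) fun y hy => ?_
  rw [dist_eq_norm]
  refine norm_inv_smul_sub_inv_smul_le hd hd' ?_ ?_ hdiam
  · calc ‖y - a - (g y - g a)‖ = ‖(g a - a) - (g y - y)‖ := by congr 1; abel
      _ ≤ K / 2 + K / 2 := (norm_sub_le _ _).trans (add_le_add (hg a) (hg y))
      _ = K := add_halves K
  · rw [← dist_eq_norm]
    exact dist_le_diam_of_mem (isBounded_image_of_dist_le hg' hS)
      (mem_image_of_mem g hy) (mem_image_of_mem g ha)

end Rescaling

theorem isCompact_Dom : IsCompact Dom := by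
  have hDom : Dom = EuclideanSpace.equiv (Fin 2) ℝ ⁻¹' Icc 0 1 := by
    ext x
    simp [Dom, Pi.le_def, Fin.forall_fin_two, and_and_and_comm]
  rw [hDom]
  exact (EuclideanSpace.equiv (Fin 2) ℝ).toHomeomorph.isCompact_preimage.2 isCompact_Icc

theorem nontrivial_Dom : Dom.Nontrivial :=
  ⟨0, by simp [Dom], EuclideanSpace.single 0 1, by simp [Dom],
    by simp [eq_comm]⟩

theorem isBounded_iterate_image_Dom (f : E2 ≃ₜ E2) (n : ℕ) : IsBounded (f^[n] '' Dom) :=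
  (isCompact_Dom.image (f.continuous.iterate n)).isBounded

theorem dn_pos (f : E2 ≃ₜ E2) (n : ℕ) : 0 < dn f n :=
  diam_pos (nontrivial_Dom.image (f.injective.iterate n)) (isBounded_iterate_image_Dom f n)

theorem hausdorffDist_An_succ_general (f : E2 ≃ₜ E2)
    (x₀ : E2) (hx₀ : x₀ ∈ Dom)
    (K : ℝ)
    (hKf : ∀ x : E2, ‖f x - x‖ ≤ K / 2) :
    ∀ n : ℕ,
      Metric.hausdorffDist (An ⇑f x₀ n) (An ⇑f x₀ (n + 1)) ≤ 2 * K / dn ⇑f n := by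
  intro n
  have hsucc : f^[n + 1] '' Dom = f '' (f^[n] '' Dom) := by
    rw [Function.iterate_succ', image_comp]
  have hdn_succ : dn f (n + 1) = diam (f '' (f^[n] '' Dom)) := by rw [dn, hsucc]
  rw [An, An, hsucc, hdn_succ, Function.iterate_succ_apply']
  exact hausdorffDist_rescale_image_le hKf (isBounded_iterate_image_Dom f n)
    (mem_image_of_mem _ hx₀) (dn_pos f n) (hdn_succ ▸ dn_pos f (n + 1))

/-- The Hausdorff distance between consecutive rescaled domains `A_n` and
`A_{n+1}` is at most `2K/d_n`, where `K/2` bounds the displacements of `f` and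
`f⁻¹`. -/
theorem hausdorffDist_An_succ (f : E2 ≃ₜ E2) (hf : IsLift ⇑f)
    (x₀ : E2) (hx₀ : x₀ ∈ Dom)
    (K : ℝ) (hK : 0 < K)
    (hKf : ∀ x : E2, ‖f x - x‖ ≤ K / 2)
    (hKf' : ∀ x : E2, ‖f.symm x - x‖ ≤ K / 2) :
    ∀ n : ℕ,
      Metric.hausdorffDist (An ⇑f x₀ n) (An ⇑f x₀ (n + 1)) ≤ 2 * K / dn ⇑f n :=
  hausdorffDist_An_succ_general f x₀ hx₀ K hKf
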